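/- Assume d_v > 0 for every v∈V, λ > 0, and s∈ℝ^V. Define 𝓓_λ(η) = ∑_{e∈E}‖η_e‖₁²/(8w_e) + (1/(2λ))∑_{v∈V}(s_v − (Bη)_v)²/d_v for η∈𝓨. Then 𝓟_λ attains its minimum over ℝ^V, 𝓓_λ attains its minimum over 𝓨, and min_{x∈ℝ^V} 𝓟_λ(x) = − min_{η∈𝓨} 𝓓_λ(η). Moreover, if η* minimizes 𝓓_λ over 𝓨, then the unique minimizer x* of 𝓟_λ is given by x*_v = (s_v − (Bη*)_v)/(λ d_v) for every v∈V. -/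

import Mathlib

open Finset

section

variable {V : Type*} [Fintype V] [DecidableEq V] [Nonempty V]
variable {E : Type*} [Fintype E]

/-- The edge range `R_e(x) = max_{u∈e} x_u - min_{v∈e} x_v`. -/
noncomputable def eRange (edge : E → Finset V) (hne : ∀ e, (edge e).Nonempty)
    (x : V → ℝ) (e : E) : ℝ :=
  (edge e).sup' (hne e) x - (edge e).inf' (hne e) x

/-- The ℓ¹ norm on ℝ^V. -/
def l1norm (η : V → ℝ) : ℝ := ∑ v, |η v|

/-- Membership in `U_e`: supported on `e` and zero-sum. -/
def memUe (edge : E → Finset V) (e : E) (η : V → ℝ) : Prop :=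
  (∀ v, v ∉ edge e → η v = 0) ∧ ∑ v, η v = 0

/-- Membership in `𝓨 = ∏_e U_e`. -/
def memY (edge : E → Finset V) (η : E → V → ℝ) : Prop := ∀ e, memUe edge e (η e)

/-- The aggregation map `Bη = ∑_e η_e`. -/
def Bmap (η : E → V → ℝ) : V → ℝ := fun v => ∑ e, η e v

/-- Weighted degree `d_v = ∑_{e ∋ v} w_e`. -/
noncomputable def degw (edge : E → Finset V) (w : E → ℝ) (v : V) : ℝ :=
  ∑ e ∈ univ.filter (fun e => v ∈ edge e), w e

/-- The regularized objective `𝓟_λ`. -/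
noncomputable def Plam (edge : E → Finset V) (hne : ∀ e, (edge e).Nonempty)
    (w : E → ℝ) (s : V → ℝ) (lam : ℝ) (x : V → ℝ) : ℝ :=
  (1 / 2) * ∑ e, w e * (eRange edge hne x e) ^ 2
    + lam / 2 * ∑ v, degw edge w v * (x v) ^ 2
    - ∑ v, s v * x v

/-- The regularized dual objective `𝓓_λ`. -/
noncomputable def Dlam (edge : E → Finset V) (w : E → ℝ) (s : V → ℝ) (lam : ℝ)
    (η : E → V → ℝ) : ℝ :=
  (∑ e, (l1norm (η e)) ^ 2 / (8 * w e))
    + (1 / (2 * lam)) * ∑ v, (s v - Bmap η v) ^ 2 / degw edge w v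

end

/-!
Everything rests on the identity
`𝓟_λ(x) + 𝓓_λ(η) = ∑_e gap_e(x, η_e) + ∑_v (λ d_v / 2) (x_v - x(η)_v)²`, where
`x(η)_v = (s_v - (Bη)_v) / (λ d_v)` and `gap_e(x, ξ) = w_e R_e(x)² / 2 + ‖ξ‖₁² / (8 w_e) - ⟨ξ, x⟩`.
On `U_e` one has `⟨ξ, x⟩ ≤ ‖ξ‖₁ R_e(x) / 2`, so every edge gap is nonnegative: weak duality.
The dual objective is coercive, hence has a minimizer `η` on the closed set `𝓨`. Moving the single
component `η_e` along a segment shows that `η_e` minimizes `gap_e(x(η), ·)` on `U_e`, and a multiple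
of the difference of the unit vectors at an argmax and an argmin of `x` on `e` makes that gap `≤ 0`.
So all terms vanish at `(x(η), η)`: strong duality. Conversely `𝓟_λ(x) + 𝓓_λ(η) ≤ 0` forces
`x = x(η)`, which gives uniqueness of the primal minimizer and its formula.
-/

theorem nonneg_of_forall_mul_add_sq_mul_nonneg {a b : ℝ}
    (h : ∀ t ∈ Set.Ioc (0 : ℝ) 1, 0 ≤ t * a + t ^ 2 * b) : 0 ≤ a := by
  have hlim : Filter.Tendsto (fun t : ℝ => a + t * b) (nhdsWithin 0 (Set.Ioi 0)) (nhds a) := by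
    have : Continuous (fun t : ℝ => a + t * b) := by fun_prop
    simpa using (this.tendsto 0).mono_left nhdsWithin_le_nhds
  refine ge_of_tendsto hlim ?_
  filter_upwards [Ioc_mem_nhdsGT one_pos] with t ht
  exact nonneg_of_mul_nonneg_right (by linear_combination h t ht) ht.1

theorem exists_isMinOn_of_isBounded_sublevel {X : Type*} [PseudoMetricSpace X] [ProperSpace X]
    {f : X → ℝ} {s : Set X} {x₀ : X} (hf : ContinuousOn f s) (hs : IsClosed s) (h₀ : x₀ ∈ s)
    (hb : Bornology.IsBounded {x ∈ s | f x ≤ f x₀}) : ∃ x ∈ s, IsMinOn f s x := by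
  have hc : {x ∈ s | f x ≤ f x₀}ᶜ ∈ Filter.cocompact X :=
    Metric.cobounded_eq_cocompact (α := X) ▸ hb
  refine hf.exists_isMinOn' hs h₀ (Filter.mem_inf_of_inter hc (Filter.mem_principal_self s) ?_)
  rintro x ⟨hx, hxs⟩
  by_contra hlt
  exact hx ⟨hxs, (not_le.1 hlt).le⟩

section
variable {V : Type*} [Fintype V]

theorem l1norm_nonneg (η : V → ℝ) : 0 ≤ l1norm η :=
  Finset.sum_nonneg fun _ _ => abs_nonneg _

theorem abs_le_l1norm (η : V → ℝ) (v : V) : |η v| ≤ l1norm η :=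
  Finset.single_le_sum (f := fun u => |η u|) (fun _ _ => abs_nonneg _) (Finset.mem_univ v)

theorem l1norm_sub_le (a b : V → ℝ) : l1norm (a - b) ≤ l1norm a + l1norm b := by
  simp only [l1norm, ← Finset.sum_add_distrib]
  exact Finset.sum_le_sum fun v _ => abs_sub _ _

theorem l1norm_pi_single [DecidableEq V] (u : V) (c : ℝ) : l1norm (Pi.single u c) = |c| := by
  simp [l1norm, Pi.single_apply, apply_ite]

theorem convexOn_l1norm : ConvexOn ℝ Set.univ (l1norm : (V → ℝ) → ℝ) := by
  refine ⟨convex_univ, fun a _ b _ α β hα hβ _ => ?_⟩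
  simp only [l1norm, smul_eq_mul, Finset.mul_sum, ← Finset.sum_add_distrib, Pi.add_apply,
    Pi.smul_apply]
  refine Finset.sum_le_sum fun v _ => (abs_add_le _ _).trans_eq ?_
  rw [abs_mul, abs_mul, abs_of_nonneg hα, abs_of_nonneg hβ]

theorem convexOn_l1norm_sq : ConvexOn ℝ Set.univ (fun η : V → ℝ => l1norm η ^ 2) :=
  convexOn_l1norm.pow (fun η _ => l1norm_nonneg η) 2

end

section Hypergraph
variable {V E : Type*}

/-- The Fenchel–Young gap of edge `e`: on `U_e`, the convex conjugate of `ξ ↦ ‖ξ‖₁² / (8 w_e)` is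
`x ↦ w_e R_e(x)² / 2`. -/
noncomputable def edgeGap [Fintype V] (edge : E → Finset V) (hne : ∀ e, (edge e).Nonempty)
    (w : E → ℝ) (x : V → ℝ) (e : E) (ξ : V → ℝ) : ℝ :=
  w e * eRange edge hne x e ^ 2 / 2 + l1norm ξ ^ 2 / (8 * w e) - ∑ v, ξ v * x v

noncomputable def dualToPrimal [Fintype E] [DecidableEq V] (edge : E → Finset V) (w : E → ℝ)
    (s : V → ℝ) (lam : ℝ) (η : E → V → ℝ) : V → ℝ :=
  fun v => (s v - Bmap η v) / (lam * degw edge w v)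

variable {edge : E → Finset V} (hne : ∀ e, (edge e).Nonempty)

theorem eRange_nonneg (x : V → ℝ) (e : E) : 0 ≤ eRange edge hne x e := by
  obtain ⟨v, hv⟩ := hne e
  exact sub_nonneg.2 ((Finset.inf'_le x hv).trans (Finset.le_sup' x hv))

theorem sum_mul_le_l1norm_mul_eRange [Fintype V] {e : E} {η : V → ℝ} (hη : memUe edge e η)
    (x : V → ℝ) :
    ∑ v, η v * x v ≤ l1norm η / 2 * eRange edge hne x e := by
  set M := (edge e).sup' (hne e) x
  set m := (edge e).inf' (hne e) x
  -- since `∑ η = 0`, the inner product does not see a shift of `x` to the midrange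
  have hshift : ∑ v, η v * x v = ∑ v, η v * (x v - (M + m) / 2) := by
    simp only [mul_sub, Finset.sum_sub_distrib, ← Finset.sum_mul, hη.2, zero_mul, sub_zero]
  have hterm : ∀ v, η v * (x v - (M + m) / 2) ≤ |η v| * ((M - m) / 2) := by
    intro v
    by_cases hv : v ∈ edge e
    · have h1 : x v ≤ M := Finset.le_sup' x hv
      have h2 : m ≤ x v := Finset.inf'_le x hv
      calc η v * (x v - (M + m) / 2) ≤ |η v| * |x v - (M + m) / 2| := by
            rw [← abs_mul]; exact le_abs_self _
        _ ≤ |η v| * ((M - m) / 2) := by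
            gcongr; rw [abs_le]; constructor <;> linarith
    · simp [hη.1 v hv]
  calc ∑ v, η v * x v ≤ ∑ v, |η v| * ((M - m) / 2) :=
        hshift ▸ Finset.sum_le_sum fun v _ => hterm v
    _ = l1norm η / 2 * eRange edge hne x e := by
        rw [← Finset.sum_mul]; simp only [l1norm, eRange]; ring

variable {w : E → ℝ}

theorem edgeGap_nonneg [Fintype V] {e : E} (hw : 0 < w e) {ξ : V → ℝ} (hξ : memUe edge e ξ)
    (x : V → ℝ) :
    0 ≤ edgeGap edge hne w x e ξ := by
  have hbound := sum_mul_le_l1norm_mul_eRange hne hξ x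
  set a := l1norm ξ
  set R := eRange edge hne x e
  have hamgm : a / 2 * R ≤ w e * R ^ 2 / 2 + a ^ 2 / (8 * w e) := by
    have hsq : w e * R ^ 2 / 2 + a ^ 2 / (8 * w e) - a / 2 * R
        = (a - 2 * w e * R) ^ 2 / (8 * w e) := by
      field_simp; ring
    linarith [div_nonneg (sq_nonneg (a - 2 * w e * R)) (by positivity : (0 : ℝ) ≤ 8 * w e)]
  unfold edgeGap
  linarith

theorem exists_edgeGap_nonpos [Fintype V] [DecidableEq V] {e : E} (hw : 0 < w e) (x : V → ℝ) :
    ∃ ξ, memUe edge e ξ ∧ edgeGap edge hne w x e ξ ≤ 0 := by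
  obtain ⟨u, hu, hxu⟩ := Finset.exists_mem_eq_sup' (hne e) x
  obtain ⟨u', hu', hxu'⟩ := Finset.exists_mem_eq_inf' (hne e) x
  set R := eRange edge hne x e
  have hR : x u - x u' = R := by simp only [R, eRange, hxu, hxu']
  set c := w e * R
  have hc : 0 ≤ c := mul_nonneg hw.le (eRange_nonneg hne x e)
  refine ⟨Pi.single u c - Pi.single u' c, ⟨fun v hv => ?_, ?_⟩, ?_⟩
  · have hvu : v ≠ u := fun h => hv (h ▸ hu)
    have hvu' : v ≠ u' := fun h => hv (h ▸ hu')
    simp [hvu, hvu']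
  · simp [Finset.sum_sub_distrib]
  · have hinner : ∑ v, (Pi.single u c - Pi.single u' c : V → ℝ) v * x v = c * R := by
      simp [sub_mul, Finset.sum_sub_distrib, Pi.single_apply, ← hR]
      ring
    have hl1 : l1norm (Pi.single u c - Pi.single u' c : V → ℝ) ≤ 2 * c := by
      have := l1norm_sub_le (Pi.single u c) (Pi.single u' c)
      rw [l1norm_pi_single, l1norm_pi_single, abs_of_nonneg hc] at this
      linarith
    have hsq : l1norm (Pi.single u c - Pi.single u' c : V → ℝ) ^ 2 / (8 * w e)
        ≤ (2 * c) ^ 2 / (8 * w e) := by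
      gcongr
      exact l1norm_nonneg _
    have : (2 * c) ^ 2 / (8 * w e) = c * R / 2 := by
      field_simp; ring
    unfold edgeGap
    linarith

theorem convexOn_edgeGap [Fintype V] {e : E} (hw : 0 ≤ w e) (x : V → ℝ) :
    ConvexOn ℝ Set.univ (edgeGap edge hne w x e) := by
  have hquad := (convexOn_l1norm_sq (V := V)).smul
    (inv_nonneg.2 (by positivity : (0 : ℝ) ≤ 8 * w e))
  have hlin := (Fintype.linearCombination ℝ x).concaveOn (convex_univ (𝕜 := ℝ))
  refine ((hquad.add_const (w e * eRange edge hne x e ^ 2 / 2)).sub hlin).congr fun ξ _ => ?_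
  simp only [edgeGap, Pi.sub_apply, Pi.add_apply, Fintype.linearCombination_apply, smul_eq_mul]
  ring

theorem memUe_smul_add_smul [Fintype V] {e : E} {a b : V → ℝ} (ha : memUe edge e a)
    (hb : memUe edge e b) (α β : ℝ) : memUe edge e (α • a + β • b) := by
  refine ⟨fun v hv => ?_, ?_⟩
  · simp [ha.1 v hv, hb.1 v hv]
  · simp [Finset.sum_add_distrib, ← Finset.mul_sum, ha.2, hb.2]

theorem memY_update [Fintype V] [DecidableEq E] {η : E → V → ℝ} (hη : memY edge η) {e : E}
    {ν : V → ℝ} (hν : memUe edge e ν) : memY edge (Function.update η e ν) := by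
  intro e'
  rcases eq_or_ne e' e with rfl | he
  · simpa using hν
  · simpa [he] using hη e'

theorem Bmap_update [Fintype E] [DecidableEq E] (η : E → V → ℝ) (e : E) (ν : V → ℝ) :
    Bmap (Function.update η e ν) = Bmap η + (ν - η e) := by
  ext v
  simp only [Bmap, Pi.add_apply, Pi.sub_apply]
  rw [← sub_eq_iff_eq_add', ← Finset.sum_sub_distrib, Fintype.sum_eq_single e]
  · simp
  · intro e' he'
    simp [he']

theorem Dlam_update [Fintype V] [DecidableEq V] [Fintype E] [DecidableEq E] (s : V → ℝ)
    (lam : ℝ) (η : E → V → ℝ) (e : E) (ν : V → ℝ) :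
    Dlam edge w s lam (Function.update η e ν) = Dlam edge w s lam η
      + (edgeGap edge hne w (dualToPrimal edge w s lam η) e ν
        - edgeGap edge hne w (dualToPrimal edge w s lam η) e (η e))
      + 1 / (2 * lam) * ∑ v, (ν v - η e v) ^ 2 / degw edge w v := by
  have hedge : ∑ e', l1norm (Function.update η e ν e') ^ 2 / (8 * w e')
      = ∑ e', l1norm (η e') ^ 2 / (8 * w e')
        + (l1norm ν ^ 2 / (8 * w e) - l1norm (η e) ^ 2 / (8 * w e)) := by
    rw [← sub_eq_iff_eq_add', ← Finset.sum_sub_distrib, Fintype.sum_eq_single e]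
    · simp
    · intro e' he'
      simp [he']
  have hvertex : ∀ v, 1 / (2 * lam) * ((s v - (Bmap η + (ν - η e)) v) ^ 2 / degw edge w v)
      = 1 / (2 * lam) * ((s v - Bmap η v) ^ 2 / degw edge w v)
        - (ν v - η e v) * dualToPrimal edge w s lam η v
        + 1 / (2 * lam) * ((ν v - η e v) ^ 2 / degw edge w v) := by
    intro v
    simp only [dualToPrimal, Pi.add_apply, Pi.sub_apply]
    ring
  simp only [Dlam, edgeGap, hedge, Bmap_update, Finset.mul_sum, hvertex, Finset.sum_add_distrib,
    Finset.sum_sub_distrib, sub_mul]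
  ring

theorem edgeGap_le_of_forall_Dlam_le [Fintype V] [DecidableEq V] [Fintype E] {s : V → ℝ}
    {lam : ℝ} {η : E → V → ℝ} (hη : memY edge η)
    (hmin : ∀ η', memY edge η' → Dlam edge w s lam η ≤ Dlam edge w s lam η') {e : E}
    (hw : 0 ≤ w e) {ξ : V → ℝ} (hξ : memUe edge e ξ) :
    edgeGap edge hne w (dualToPrimal edge w s lam η) e (η e)
      ≤ edgeGap edge hne w (dualToPrimal edge w s lam η) e ξ := by
  classical
  set g := edgeGap edge hne w (dualToPrimal edge w s lam η) e
  set K := 1 / (2 * lam) * ∑ v, (ξ v - η e v) ^ 2 / degw edge w v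
  -- moving `η e` to `(1 - t) η_e + t ξ` raises `Dlam` by at most `t (g ξ - g (η e)) + t² K`
  refine sub_nonneg.1 (nonneg_of_forall_mul_add_sq_mul_nonneg (b := K) fun t ht => ?_)
  set ν := (1 - t) • η e + t • ξ
  have hD := hmin _ (memY_update hη (memUe_smul_add_smul (hη e) hξ (1 - t) t))
  rw [Dlam_update hne] at hD
  have hconv : g ν ≤ (1 - t) * g (η e) + t * g ξ :=
    (convexOn_edgeGap hne hw _).2 (Set.mem_univ _) (Set.mem_univ _) (sub_nonneg.2 ht.2) ht.1.le
      (by ring)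
  have hquad : 1 / (2 * lam) * ∑ v, (ν v - η e v) ^ 2 / degw edge w v = t ^ 2 * K := by
    simp only [K, ν, Finset.mul_sum, Pi.add_apply, Pi.smul_apply, smul_eq_mul]
    refine Finset.sum_congr rfl fun v _ => ?_
    ring
  linarith

theorem sum_sum_mul_eq_sum_Bmap_mul [Fintype V] [Fintype E] (η : E → V → ℝ) (x : V → ℝ) :
    ∑ e, ∑ v, η e v * x v = ∑ v, Bmap η v * x v := by
  rw [Finset.sum_comm]
  simp only [Bmap, Finset.sum_mul]

theorem Plam_add_Dlam [Fintype V] [DecidableEq V] [Fintype E] {lam : ℝ} (hlam : lam ≠ 0)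
    (hd : ∀ v, degw edge w v ≠ 0) (s x : V → ℝ) (η : E → V → ℝ) :
    Plam edge hne w s lam x + Dlam edge w s lam η
      = ∑ e, edgeGap edge hne w x e (η e)
        + ∑ v, lam * degw edge w v / 2 * (x v - dualToPrimal edge w s lam η v) ^ 2 := by
  have hvertex : ∀ v, lam / 2 * (degw edge w v * x v ^ 2) - s v * x v
      + 1 / (2 * lam) * ((s v - Bmap η v) ^ 2 / degw edge w v)
      = lam * degw edge w v / 2 * (x v - dualToPrimal edge w s lam η v) ^ 2
        - Bmap η v * x v := by
    intro v
    have := hd v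
    simp only [dualToPrimal]
    field_simp
    ring
  calc Plam edge hne w s lam x + Dlam edge w s lam η
      = ∑ e, (w e * eRange edge hne x e ^ 2 / 2 + l1norm (η e) ^ 2 / (8 * w e))
        + ∑ v, (lam / 2 * (degw edge w v * x v ^ 2) - s v * x v
          + 1 / (2 * lam) * ((s v - Bmap η v) ^ 2 / degw edge w v)) := by
        simp only [Plam, Dlam, Finset.sum_add_distrib, Finset.sum_sub_distrib, Finset.mul_sum]
        ring_nf
    _ = ∑ e, (edgeGap edge hne w x e (η e) + ∑ v, η e v * x v)
        + ∑ v, (lam * degw edge w v / 2 * (x v - dualToPrimal edge w s lam η v) ^ 2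
          - Bmap η v * x v) := by
        simp only [hvertex, edgeGap, sub_add_cancel]
    _ = _ := by
        rw [Finset.sum_add_distrib, Finset.sum_sub_distrib, sum_sum_mul_eq_sum_Bmap_mul]
        ring

theorem isClosed_setOf_memY [Fintype V] : IsClosed {η : E → V → ℝ | memY edge η} := by
  simp only [memY, memUe, Set.ofPred_forall, Set.ofPred_and]
  refine isClosed_iInter fun e => IsClosed.inter ?_ ?_
  · exact isClosed_iInter fun v => isClosed_iInter fun _ => isClosed_eq (by fun_prop) (by fun_prop)
  · exact isClosed_eq (by fun_prop) (by fun_prop)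

theorem continuous_Dlam [Fintype V] [DecidableEq V] [Fintype E] (s : V → ℝ) (lam : ℝ) :
    Continuous (Dlam edge w s lam) := by
  unfold Dlam l1norm Bmap
  fun_prop

theorem l1norm_sq_div_le_Dlam [Fintype V] [DecidableEq V] [Fintype E] (hw : ∀ e, 0 ≤ w e)
    {lam : ℝ} (hlam : 0 ≤ lam) (hd : ∀ v, 0 ≤ degw edge w v) (s : V → ℝ) (η : E → V → ℝ)
    (e : E) : l1norm (η e) ^ 2 / (8 * w e) ≤ Dlam edge w s lam η := by
  have hsingle := Finset.single_le_sum (f := fun e => l1norm (η e) ^ 2 / (8 * w e))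
    (fun e _ => by have := hw e; positivity) (Finset.mem_univ e)
  have hrest : 0 ≤ 1 / (2 * lam) * ∑ v, (s v - Bmap η v) ^ 2 / degw edge w v :=
    mul_nonneg (by positivity) (Finset.sum_nonneg fun v _ => by have := hd v; positivity)
  unfold Dlam
  linarith

theorem exists_forall_Dlam_le [Fintype V] [DecidableEq V] [Fintype E] (hw : ∀ e, 0 < w e)
    {lam : ℝ} (hlam : 0 ≤ lam) (hd : ∀ v, 0 ≤ degw edge w v) (s : V → ℝ) :
    ∃ η, memY edge η ∧ ∀ η', memY edge η' → Dlam edge w s lam η ≤ Dlam edge w s lam η' := by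
  have h₀ : memY edge (0 : E → V → ℝ) := fun e => ⟨fun _ _ => rfl, by simp⟩
  set D₀ := Dlam edge w s lam 0
  have hbdd : Bornology.IsBounded {η ∈ {η | memY edge η} | Dlam edge w s lam η ≤ D₀} := by
    refine Bornology.forall_isBounded_image_eval_iff.1 fun e =>
      Bornology.forall_isBounded_image_eval_iff.1 fun v => ?_
    refine isBounded_iff_forall_norm_le.2 ⟨√(8 * w e * D₀), ?_⟩
    rintro _ ⟨_, ⟨η, ⟨_, hη⟩, rfl⟩, rfl⟩
    have hl1 := l1norm_sq_div_le_Dlam (fun e => (hw e).le) hlam hd s η e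
    rw [div_le_iff₀ (by linarith [hw e])] at hl1
    refine Real.abs_le_sqrt ?_
    calc η e v ^ 2 ≤ l1norm (η e) ^ 2 := by
          rw [← sq_abs]
          exact pow_le_pow_left₀ (abs_nonneg _) (abs_le_l1norm _ v) 2
      _ ≤ 8 * w e * D₀ := by
          linarith [mul_le_mul_of_nonneg_right hη (by linarith [hw e] : (0 : ℝ) ≤ 8 * w e)]
  obtain ⟨η, hη, hmin⟩ := exists_isMinOn_of_isBounded_sublevel
    (continuous_Dlam s lam).continuousOn isClosed_setOf_memY h₀ hbdd
  exact ⟨η, hη, fun η' hη' => hmin hη'⟩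

variable [Fintype V] [DecidableEq V] [Fintype E] {s : V → ℝ} {lam : ℝ}

theorem Plam_add_Dlam_nonneg (hw : ∀ e, 0 < w e) (hlam : 0 < lam) (hd : ∀ v, 0 < degw edge w v)
    (x : V → ℝ) {η : E → V → ℝ} (hη : memY edge η) :
    0 ≤ Plam edge hne w s lam x + Dlam edge w s lam η := by
  rw [Plam_add_Dlam hne hlam.ne' fun v => (hd v).ne']
  refine add_nonneg (Finset.sum_nonneg fun e _ => edgeGap_nonneg hne (hw e) (hη e) x)
    (Finset.sum_nonneg fun v _ => ?_)
  have := hd v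
  positivity

theorem eq_dualToPrimal_of_Plam_add_Dlam_nonpos (hw : ∀ e, 0 < w e) (hlam : 0 < lam)
    (hd : ∀ v, 0 < degw edge w v) {x : V → ℝ} {η : E → V → ℝ} (hη : memY edge η)
    (h : Plam edge hne w s lam x + Dlam edge w s lam η ≤ 0) :
    x = dualToPrimal edge w s lam η := by
  rw [Plam_add_Dlam hne hlam.ne' fun v => (hd v).ne'] at h
  have hterm_nonneg : ∀ v ∈ Finset.univ,
      0 ≤ lam * degw edge w v / 2 * (x v - dualToPrimal edge w s lam η v) ^ 2 := by
    intro v _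
    have := hd v
    positivity
  have hedge := Finset.sum_nonneg fun e (_ : e ∈ Finset.univ) =>
    edgeGap_nonneg hne (hw e) (hη e) x
  have hzero := (Finset.sum_eq_zero_iff_of_nonneg hterm_nonneg).1
    (le_antisymm (by linarith) (Finset.sum_nonneg hterm_nonneg))
  ext v
  simpa [sub_eq_zero, hlam.ne', (hd v).ne'] using hzero v (Finset.mem_univ v)

theorem Plam_dualToPrimal_add_Dlam_eq_zero (hw : ∀ e, 0 < w e) (hlam : 0 < lam)
    (hd : ∀ v, 0 < degw edge w v) {η : E → V → ℝ} (hη : memY edge η)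
    (hmin : ∀ η', memY edge η' → Dlam edge w s lam η ≤ Dlam edge w s lam η') :
    Plam edge hne w s lam (dualToPrimal edge w s lam η) + Dlam edge w s lam η = 0 := by
  refine le_antisymm ?_ (Plam_add_Dlam_nonneg hne hw hlam hd _ hη)
  have hedge : ∀ e, edgeGap edge hne w (dualToPrimal edge w s lam η) e (η e) ≤ 0 := by
    intro e
    obtain ⟨ξ, hξ, hgap⟩ := exists_edgeGap_nonpos hne (hw e) (dualToPrimal edge w s lam η)
    exact (edgeGap_le_of_forall_Dlam_le hne hη hmin (hw e).le hξ).trans hgap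
  rw [Plam_add_Dlam hne hlam.ne' fun v => (hd v).ne']
  simpa using Finset.sum_nonpos fun e _ => hedge e

end Hypergraph

section

variable {V : Type*} [Fintype V] [DecidableEq V] [Nonempty V]
variable {E : Type*} [Fintype E]

theorem stmt18 (edge : E → Finset V) (hne : ∀ e, (edge e).Nonempty)
    (w : E → ℝ) (hw : ∀ e, 0 < w e) (s : V → ℝ)
    (lam : ℝ) (hlam : 0 < lam)
    (hd : ∀ v, 0 < degw edge w v) :
    ∃ xstar : V → ℝ,
      (∀ x, Plam edge hne w s lam xstar ≤ Plam edge hne w s lam x) ∧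
      (∀ x, (∀ y, Plam edge hne w s lam x ≤ Plam edge hne w s lam y) → x = xstar) ∧
      ∃ ηstar : E → V → ℝ, memY edge ηstar ∧
        (∀ η, memY edge η → Dlam edge w s lam ηstar ≤ Dlam edge w s lam η) ∧
        Plam edge hne w s lam xstar = - Dlam edge w s lam ηstar ∧
        ∀ η' : E → V → ℝ, memY edge η' →
          (∀ η, memY edge η → Dlam edge w s lam η' ≤ Dlam edge w s lam η) →
          ∀ v, xstar v = (s v - Bmap η' v) / (lam * degw edge w v) := by
  obtain ⟨ηstar, hηstar, hmin⟩ := exists_forall_Dlam_le hw hlam.le (fun v => (hd v).le) s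
  have hgap := Plam_dualToPrimal_add_Dlam_eq_zero hne hw hlam hd hηstar hmin
  have hweak : ∀ x, 0 ≤ Plam edge hne w s lam x + Dlam edge w s lam ηstar :=
    fun x => Plam_add_Dlam_nonneg hne hw hlam hd x hηstar
  refine ⟨dualToPrimal edge w s lam ηstar, fun x => by linarith [hweak x], fun x hx => ?_,
    ηstar, hηstar, hmin, by linarith, fun η' hη' hmin' v => ?_⟩
  · exact eq_dualToPrimal_of_Plam_add_Dlam_nonpos hne hw hlam hd hηstar
      (by linarith [hx (dualToPrimal edge w s lam ηstar)])
  · have hD : Dlam edge w s lam η' = Dlam edge w s lam ηstar :=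
      le_antisymm (hmin' _ hηstar) (hmin _ hη')
    exact congrFun (eq_dualToPrimal_of_Plam_add_Dlam_nonpos hne hw hlam hd hη'
      (by linarith)) v

end
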